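/- Fundamental Theorem of Subresultants (vanishing part): Let (P_1,...,P_k) be a complete PRS for F and G with n_i = deg(P_i). Then S_j(F,G) = 0 for every j with 0 ≤ j < n_k, and for every i = 3,...,k, S_j(F,G) = 0 for every j with n_i < j < n_{i-1} − 1. -/

import Mathlib

/-!
Every remainder is a combination `P i = U * F + V * G` whose cofactors satisfy
`deg U + deg P_{i-1} ≤ deg G` and `deg V + deg P_{i-1} ≤ deg F`; this propagates through the
relations `α_i P_{i-2} = q_{i-1} P_{i-1} + β_i P_i` because
`deg q_{i-1} + deg P_{i-1} ≤ deg P_{i-2}`. If `deg P_i < j < deg P_{i-1} - 1`, these bounds leave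
room for one more degree, so for each `τ ≤ j` there is a nonzero `w` of degree at most one such
that `w P_i` has degree at most `j` and no `xᵗ` term. The coefficient column of the nonzero pair
`(w U, w V)` is then mapped to zero by `N_τ^(j)(F, G)`, whose rows compute the coefficients of
`w P_i` in the degrees above `j` and in degree `τ`. Hence every coefficient `det N_τ^(j)(F, G)` of
`S_j(F, G)` vanishes.
-/

open Polynomial Finset

section Defs

variable {K : Type*} [Field K]

/-- Entry `(p, q)` (0-indexed) of the `j`-th subresultant matrix `N^(j)(A, B)`,
where `a`, `b` denote the degrees of `A`, `B`.  The first `b - j` columns carry the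
shifted coefficients of `A`, the next `a - j` columns those of `B`. -/
noncomputable def subresEntry (A B : Polynomial K) (a b j p q : ℕ) : K :=
  if q < b - j then
    (if q ≤ p ∧ p ≤ q + a then A.coeff (a - (p - q)) else 0)
  else if q < (b - j) + (a - j) then
    (if q - (b - j) ≤ p ∧ p ≤ (q - (b - j)) + b then
        B.coeff (b - (p - (q - (b - j)))) else 0)
  else 0

/-- Determinant of the top-left `s × s` square of a `ℕ`-indexed matrix. -/
noncomputable def detN (s : ℕ) (M : ℕ → ℕ → K) : K :=
  Matrix.det (Matrix.of (fun p q : Fin s => M (p : ℕ) (q : ℕ)))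

/-- Entries of `N_τ^(j)(A, B)`: the top `a + b - 2j - 1` rows of `N^(j)(A, B)`
together with its `(a + b - j - τ)`-th row (1-indexed). -/
noncomputable def subresTau (A B : Polynomial K) (a b j τ : ℕ) : ℕ → ℕ → K := fun p q =>
  subresEntry A B a b j (if p < a + b - 2 * j - 1 then p else a + b - j - τ - 1) q

/-- The `j`-th subresultant `S_j(A, B) = Σ_{τ=0}^{j} det(N_τ^(j)(A, B)) xᵗ`. -/
noncomputable def subresPoly (A B : Polynomial K) (a b j : ℕ) : Polynomial K :=
  ∑ τ ∈ Finset.range (j + 1),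
    Polynomial.C (detN (a + b - 2 * j) (subresTau A B a b j τ)) * Polynomial.X ^ τ

/-- `u_{k,j}`; for `k = 1` it is `m + n - 2j`, and for `k ≥ 2` it equals
`(m+n-2j₁)·(∏_{l=2}^{k-1}(2j_{l-1}-2j_l-1))·(2j_{k-1}-2j-1)`. -/
def ufun (m n : ℕ) (jj : ℕ → ℕ) (k j : ℕ) : ℕ :=
  if k ≤ 1 then m + n - 2 * j
  else (m + n - 2 * jj 1) * (∏ i ∈ Finset.Icc 2 (k - 1), (2 * jj (i - 1) - 2 * jj i - 1)) *
        (2 * jj (k - 1) - 2 * j - 1)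

/-- `b_{k,j} = 2j_{k-1} - 2j - 1`, with `b_{1,j} = 1`. -/
def bfun (jj : ℕ → ℕ) (k j : ℕ) : ℕ :=
  if k ≤ 1 then 1 else 2 * jj (k - 1) - 2 * j - 1

/-- `r_{k,j} = (-1)^{(u_{k-1}-1)(1+2+⋯+(b_{k,j}-1))}`, with `r_{1,j} = 1`. -/
noncomputable def rfun (K : Type*) [Field K] (m n : ℕ) (jj : ℕ → ℕ) (k j : ℕ) : K :=
  if k ≤ 1 then 1
  else (-1 : K) ^ ((ufun m n jj (k - 1) (jj (k - 1)) - 1) * ∑ i ∈ Finset.range (bfun jj k j), i)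

/-- The constant `B_k` of the fundamental theorem applied to the `k`-th PRS. -/
noncomputable def Bconst (P : ℕ → ℕ → Polynomial K) (l : ℕ → ℕ) (α β : ℕ → ℕ → K) (k : ℕ) : K :=
  (P k (l k)).leadingCoeff ^ (((P k (l k - 1)).natDegree - (P k (l k)).natDegree) - 1) *
    ∏ i ∈ Finset.Icc 3 (l k),
      ((β k i / α k i) ^ ((P k (i - 1)).natDegree - (P k (l k)).natDegree) *
        (P k (i - 1)).leadingCoeff ^
          (((P k (i - 2)).natDegree - (P k (i - 1)).natDegree) +
            ((P k (i - 1)).natDegree - (P k i).natDegree)) *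
        (-1 : K) ^ (((P k (i - 2)).natDegree - (P k (l k)).natDegree) *
            ((P k (i - 1)).natDegree - (P k (l k)).natDegree)))

/-- `R̄_k = (R̄_{k-1})^{b_k} r_k B_k` with `R̄_0 = 1`. -/
noncomputable def Rbar (P : ℕ → ℕ → Polynomial K) (l : ℕ → ℕ) (α β : ℕ → ℕ → K)
    (m n : ℕ) (jj : ℕ → ℕ) : ℕ → K
  | 0 => 1
  | k + 1 =>
      (Rbar P l α β m n jj k) ^ (bfun jj (k + 1) (jj (k + 1))) *
        rfun K m n jj (k + 1) (jj (k + 1)) * Bconst P l α β (k + 1)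

/-- `R̃_k = (R̃_{k-1})^{b_k} B_k` with `R̃_0 = R̃_1 = 1`. -/
noncomputable def Rtil (P : ℕ → ℕ → Polynomial K) (l : ℕ → ℕ) (α β : ℕ → ℕ → K)
    (jj : ℕ → ℕ) : ℕ → K
  | 0 => 1
  | 1 => 1
  | k + 2 => (Rtil P l α β jj (k + 1)) ^ (bfun jj (k + 2) (jj (k + 2))) * Bconst P l α β (k + 2)

/-- `R'_k = (R'_{k-1})^{b_k} r_k` with `R'_0 = R'_1 = 1`. -/
noncomputable def Rprime (K : Type*) [Field K] (m n : ℕ) (jj : ℕ → ℕ) : ℕ → K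
  | 0 => 1
  | 1 => 1
  | k + 2 =>
      (Rprime K m n jj (k + 1)) ^ (bfun jj (k + 2) (jj (k + 2))) *
        rfun K m n jj (k + 2) (jj (k + 2))

/-- Number of columns of the `(k,j)`-th recursive subresultant matrix,
following its recursive block construction. -/
def colsRec (m n : ℕ) (jj : ℕ → ℕ) : ℕ → ℕ → ℕ
  | 0, _ => 0
  | 1, j => m + n - 2 * j
  | k + 2, j => (2 * jj (k + 1) - 2 * j - 1) * colsRec m n jj (k + 1) (jj (k + 1))

/-- Number of rows of the `(k,j)`-th recursive subresultant matrix,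
following its recursive block construction. -/
def rowsRec (m n : ℕ) (jj : ℕ → ℕ) : ℕ → ℕ → ℕ
  | 0, _ => 0
  | 1, j => m + n - j
  | k + 2, j =>
      (2 * jj (k + 1) - 2 * j - 1) * (rowsRec m n jj (k + 1) (jj (k + 1)) - (jj (k + 1) + 1)) +
        (2 * jj (k + 1) - j - 1)

/-- Entry `(p, q)` of the `(k, j)`-th recursive subresultant matrix `N̄^(k,j)(F, G)`.
For `k = 1` it is the subresultant matrix `N^(j)(F, G)`; for `k ≥ 2` it consists of a
block-diagonal upper part with `2j_{k-1}-2j-1` copies of `N̄_U^{(k-1,j_{k-1})}` and a lower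
part with `j_{k-1}-j-1` staggered copies of `N̄_L^{(k-1,j_{k-1})}` followed by `j_{k-1}-j`
staggered copies of `N̄'_L^{(k-1,j_{k-1})}`. -/
noncomputable def recMat (F G : Polynomial K) (m n : ℕ) (jj : ℕ → ℕ) : ℕ → ℕ → ℕ → ℕ → K
  | 0, _, _, _ => 0
  | 1, j, p, q => subresEntry F G m n j p q
  | k + 2, j, p, q =>
      let jp := jj (k + 1)
      let w := colsRec m n jj (k + 1) jp
      let hU := rowsRec m n jj (k + 1) jp - (jp + 1)
      let b := 2 * jp - 2 * j - 1
      if q < b * w then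
        if p < b * hU then
          (if q / w = p / hU then recMat F G m n jj (k + 1) jp (p % hU) (q % w) else 0)
        else
          (let r := p - b * hU
            if r < 2 * jp - j - 1 then
              if q / w < jp - j - 1 then
                (if q / w ≤ r ∧ r ≤ q / w + jp then
                    recMat F G m n jj (k + 1) jp (hU + (r - q / w)) (q % w)
                  else 0)
              else
                (let i' := q / w - (jp - j - 1)
                  if i' ≤ r ∧ r < i' + jp then
                    ((jp - (r - i') : ℕ) : K) *
                      recMat F G m n jj (k + 1) jp (hU + (r - i')) (q % w)
                  else 0)
            else 0)
      else 0

/-- Entries of `N̄_τ^(k,j)(F, G)`: the top `u_{k,j} - 1` rows of `N̄^(k,j)(F, G)` together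
with its `(u_{k,j} + j - τ)`-th row (1-indexed). -/
noncomputable def recTau (F G : Polynomial K) (m n : ℕ) (jj : ℕ → ℕ) (k j τ : ℕ) :
    ℕ → ℕ → K := fun p q =>
  recMat F G m n jj k j
    (if p < ufun m n jj k j - 1 then p else ufun m n jj k j + j - τ - 1) q

/-- The `(k, j)`-th recursive subresultant `S̄_{k,j}(F, G)`. -/
noncomputable def recSubPoly (F G : Polynomial K) (m n : ℕ) (jj : ℕ → ℕ) (k j : ℕ) :
    Polynomial K :=
  ∑ τ ∈ Finset.range (j + 1),
    Polynomial.C (detN (ufun m n jj k j) (recTau F G m n jj k j τ)) * Polynomial.X ^ τ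

/-- Entry `(p, q)` of the `(k, j)`-th nested subresultant matrix `Ñ^(k,j)(F, G)`:
`Ñ^(1,j) = N^(j)(P₁⁽¹⁾, P₂⁽¹⁾)` and
`Ñ^(k,j) = N^(j)(S̃_{k-1,j_{k-1}}, (d/dx) S̃_{k-1,j_{k-1}})` for `k ≥ 2`. -/
noncomputable def nestMat (P : ℕ → ℕ → Polynomial K) (jj : ℕ → ℕ) : ℕ → ℕ → ℕ → ℕ → K
  | 0, _, _, _ => 0
  | 1, j, p, q =>
      subresEntry (P 1 1) (P 1 2) (P 1 1).natDegree (P 1 2).natDegree j p q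
  | k + 2, j, p, q =>
      let d := (P (k + 1) 1).natDegree + (P (k + 1) 2).natDegree
      let Sprev : Polynomial K :=
        ∑ τ ∈ Finset.range (jj (k + 1) + 1),
          Polynomial.C (detN (d - 2 * jj (k + 1)) (fun p' q' =>
            nestMat P jj (k + 1) (jj (k + 1))
              (if p' < d - 2 * jj (k + 1) - 1 then p' else d - jj (k + 1) - τ - 1) q')) *
            Polynomial.X ^ τ
      subresEntry Sprev (Polynomial.derivative Sprev)
        (P (k + 2) 1).natDegree (P (k + 2) 2).natDegree j p q

/-- Entries of `Ñ_τ^(k,j)(F, G)`. -/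
noncomputable def nestTau (P : ℕ → ℕ → Polynomial K) (jj : ℕ → ℕ) (k j τ : ℕ) :
    ℕ → ℕ → K := fun p q =>
  nestMat P jj k j
    (if p < (P k 1).natDegree + (P k 2).natDegree - 2 * j - 1 then p
      else (P k 1).natDegree + (P k 2).natDegree - j - τ - 1) q

/-- The `(k, j)`-th nested subresultant `S̃_{k,j}(F, G)`. -/
noncomputable def nestSub (P : ℕ → ℕ → Polynomial K) (jj : ℕ → ℕ) (k j : ℕ) : Polynomial K :=
  ∑ τ ∈ Finset.range (j + 1),
    Polynomial.C
      (detN ((P k 1).natDegree + (P k 2).natDegree - 2 * j) (nestTau P jj k j τ)) *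
      Polynomial.X ^ τ

/-- Entry `(p, q)` of the `(k, j)`-th reduced nested subresultant matrix `N̂^(k,j)(F, G)`:
it is `N^(j)(F, G)` for `k = 1`; for `k ≥ 2`, writing the upper part of
`N̂^{(k-1,j_{k-1})}` as `(U | v)` with `U` square, the entry `h_{p,q}` is `x_{p,q} · v`
where `x_{p,q}` solves `x_{p,q} U = -b_{p,q}` and `b_{p,q}` is built from the bottom rows
of `N̂^{(k-1,j_{k-1})}` exactly as the entry `(p, q)` of
`H^(k,j) = N^(j)(Â^{(k-1)}, (d/dx)Â^{(k-1)})` is built from the coefficients of `Â^{(k-1)}`. -/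
noncomputable def redMat (P : ℕ → ℕ → Polynomial K) (jj : ℕ → ℕ) : ℕ → ℕ → ℕ → ℕ → K
  | 0, _, _, _ => 0
  | 1, j, p, q =>
      subresEntry (P 1 1) (P 1 2) (P 1 1).natDegree (P 1 2).natDegree j p q
  | k + 2, j, p, q =>
      let jp := jj (k + 1)
      let s := (P (k + 1) 1).natDegree + (P (k + 1) 2).natDegree - 2 * jp - 1
      let U : Matrix (Fin s) (Fin s) K :=
        Matrix.of fun r c => redMat P jj (k + 1) jp (r : ℕ) (c : ℕ)
      let v : Fin s → K := fun r => redMat P jj (k + 1) jp (r : ℕ) s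
      let coefPoly : (ℕ → K) → Polynomial K := fun φ =>
        ∑ τ ∈ Finset.range (jp + 1), Polynomial.C (φ τ) * Polynomial.X ^ τ
      let Hent : (ℕ → K) → K := fun φ =>
        subresEntry (coefPoly φ) (Polynomial.derivative (coefPoly φ))
          (P (k + 2) 1).natDegree (P (k + 2) 2).natDegree j p q
      let brow : Fin s → K := fun c =>
        Hent (fun τ => redMat P jj (k + 1) jp (s + (jp - τ)) (c : ℕ))
      dotProduct (Matrix.vecMul (fun c => -(brow c)) U⁻¹) v

/-- `Â_τ^{(k)} = det(N̂_τ^{(k,j_k)})`. -/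
noncomputable def Ahat (P : ℕ → ℕ → Polynomial K) (jj : ℕ → ℕ) (k τ : ℕ) : K :=
  detN ((P k 1).natDegree + (P k 2).natDegree - 2 * jj k) (fun r c =>
    redMat P jj k (jj k)
      (if r < (P k 1).natDegree + (P k 2).natDegree - 2 * jj k - 1 then r
        else ((P k 1).natDegree + (P k 2).natDegree - 2 * jj k - 1) + (jj k - τ)) c)

/-- `Â^{(k)}(x) = Σ_τ Â_τ^{(k)} xᵗ`. -/
noncomputable def Apoly (P : ℕ → ℕ → Polynomial K) (jj : ℕ → ℕ) (k : ℕ) : Polynomial K :=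
  ∑ τ ∈ Finset.range (jj k + 1), Polynomial.C (Ahat P jj k τ) * Polynomial.X ^ τ

/-- Entries of `H^(k,j) = N^(j)(Â^{(k-1)}(x), (d/dx)Â^{(k-1)}(x))`. -/
noncomputable def Hmat (P : ℕ → ℕ → Polynomial K) (jj : ℕ → ℕ) (k j : ℕ) : ℕ → ℕ → K :=
  fun p q =>
    subresEntry (Apoly P jj (k - 1)) (Polynomial.derivative (Apoly P jj (k - 1)))
      (P k 1).natDegree (P k 2).natDegree j p q

/-- Entries of `H_τ^(k,j)`: top `J_{k,j} - 1` rows of `H^(k,j)` together with its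
`(I_{k,j} - τ)`-th row (1-indexed). -/
noncomputable def HTau (P : ℕ → ℕ → Polynomial K) (jj : ℕ → ℕ) (k j τ : ℕ) :
    ℕ → ℕ → K := fun p q =>
  Hmat P jj k j
    (if p < (P k 1).natDegree + (P k 2).natDegree - 2 * j - 1 then p
      else (P k 1).natDegree + (P k 2).natDegree - j - τ - 1) q

/-- Entries of `N̂_τ^(k,j)(F, G)`. -/
noncomputable def redTau (P : ℕ → ℕ → Polynomial K) (jj : ℕ → ℕ) (k j τ : ℕ) :
    ℕ → ℕ → K := fun p q =>
  redMat P jj k j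
    (if p < (P k 1).natDegree + (P k 2).natDegree - 2 * j - 1 then p
      else (P k 1).natDegree + (P k 2).natDegree - j - τ - 1) q

/-- The `(k, j)`-th reduced nested subresultant `Ŝ_{k,j}(F, G)`. -/
noncomputable def redSubPoly (P : ℕ → ℕ → Polynomial K) (jj : ℕ → ℕ) (k j : ℕ) :
    Polynomial K :=
  ∑ τ ∈ Finset.range (j + 1),
    Polynomial.C
      (detN ((P k 1).natDegree + (P k 2).natDegree - 2 * j) (redTau P jj k j τ)) *
      Polynomial.X ^ τ

/-- `det(U^(k))`, where `U^(k)` is the square left part of the upper block of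
`N̂^{(k-1,j_{k-1})}(F, G)`. -/
noncomputable def Udet (P : ℕ → ℕ → Polynomial K) (jj : ℕ → ℕ) (k : ℕ) : K :=
  detN ((P (k - 1) 1).natDegree + (P (k - 1) 2).natDegree - 2 * jj (k - 1) - 1)
    (redMat P jj (k - 1) (jj (k - 1)))

/-- `B̂_{k,j} = det(U^(k))^{J_{k,j}}` (with `B̂_{1,j} = 1`). -/
noncomputable def Bhatkj (P : ℕ → ℕ → Polynomial K) (jj : ℕ → ℕ) (k j : ℕ) : K :=
  if k ≤ 1 then 1
  else (Udet P jj k) ^ ((P k 1).natDegree + (P k 2).natDegree - 2 * j)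

/-- `B̂_k = B̂_{k,j_k}` with `B̂_1 = B̂_2 = 1`. -/
noncomputable def BhatK (P : ℕ → ℕ → Polynomial K) (jj : ℕ → ℕ) (k : ℕ) : K :=
  if k ≤ 2 then 1 else Bhatkj P jj k (jj k)

/-- `R̂_k = (R̂_{k-1}·B̂_{k-1})^{J_{k,j_k}}` with `R̂_1 = R̂_2 = 1`. -/
noncomputable def Rhat (P : ℕ → ℕ → Polynomial K) (jj : ℕ → ℕ) : ℕ → K
  | 0 => 1
  | 1 => 1
  | 2 => 1
  | k + 3 =>
      (Rhat P jj (k + 2) * BhatK P jj (k + 2)) ^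
        ((P (k + 3) 1).natDegree + (P (k + 3) 2).natDegree - 2 * jj (k + 3))

end Defs

section

variable {K : Type*} [Field K]

lemma natDegree_add_le_of_degree_add_le {p q r : K[X]} (h : p.degree + q.degree ≤ r.degree)
    (hq : q ≠ 0) (hqr : q.natDegree ≤ r.natDegree) : p.natDegree + q.natDegree ≤ r.natDegree := by
  by_cases hp : p = 0
  · simpa [hp] using hqr
  · rw [← natDegree_mul hp hq]
    exact natDegree_le_natDegree (by rwa [degree_mul])

lemma sum_ite_coeff_mul_coeff (A u : K[X]) {a N r : ℕ} (hA : A.natDegree ≤ a)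
    (hu : u.degree < N) (hr : r < a + N) :
    ∑ q ∈ range N, (if q ≤ r ∧ r ≤ q + a then A.coeff (a - (r - q)) else 0) * u.coeff (N - 1 - q) =
      (u * A).coeff (a + N - 1 - r) := by
  set D := a + N - 1 - r
  have hterm : ∀ e ∈ range N,
      (if N - 1 - e ≤ r ∧ r ≤ N - 1 - e + a then A.coeff (a - (r - (N - 1 - e))) else 0) *
        u.coeff (N - 1 - (N - 1 - e)) = if e ≤ D then u.coeff e * A.coeff (D - e) else 0 := by
    intro e he
    have he : e < N := mem_range.1 he
    rw [show N - 1 - (N - 1 - e) = e by omega]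
    by_cases heD : e ≤ D
    · rw [if_pos heD]
      by_cases hq : N - 1 - e ≤ r
      · rw [if_pos ⟨hq, by omega⟩, show a - (r - (N - 1 - e)) = D - e by omega, mul_comm]
      · rw [if_neg (by omega), coeff_eq_zero_of_natDegree_lt (by omega : A.natDegree < D - e),
          zero_mul, mul_zero]
    · rw [if_neg heD, if_neg (by omega), zero_mul]
  rw [← sum_range_reflect, sum_congr rfl hterm, ← sum_filter, coeff_mul,
    Nat.sum_antidiagonal_eq_sum_range_succ_mk]
  refine sum_subset (fun e he => ?_) (fun e he he' => ?_)
  · simp only [mem_filter, mem_range] at he ⊢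
    omega
  · have hNe : N ≤ e := by
      simp only [mem_filter, mem_range, not_and] at he he'
      by_contra h
      exact he' (by omega) (by omega)
    rw [coeff_eq_zero_of_degree_lt (hu.trans_le (by exact_mod_cast hNe)), zero_mul]

/-- The coefficients of `u` and of `v`, each listed from the top degree down, stacked so that
`N^(j)(F, G)` applied to this column yields the coefficients of `u * F + v * G`. -/
noncomputable def sylvesterVec (u v : K[X]) (m n j : ℕ) (q : ℕ) : K :=
  if q < n - j then u.coeff (n - j - 1 - q) else v.coeff (m - j - 1 - (q - (n - j)))

lemma sum_subresEntry_mul_sylvesterVec {F G u v : K[X]} {m n j r : ℕ}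
    (hF : F.natDegree ≤ m) (hG : G.natDegree ≤ n) (hjn : j ≤ n) (hjm : j ≤ m)
    (hu : u.degree < ↑(n - j)) (hv : v.degree < ↑(m - j)) (hr : r < m + n - j) :
    ∑ q ∈ range (m + n - 2 * j), subresEntry F G m n j r q * sylvesterVec u v m n j q =
      (u * F + v * G).coeff (m + n - j - 1 - r) := by
  rw [show m + n - 2 * j = (n - j) + (m - j) by omega, sum_range_add, coeff_add]
  congr 1
  · rw [show m + n - j - 1 - r = m + (n - j) - 1 - r by omega,
      ← sum_ite_coeff_mul_coeff F u hF hu (by omega)]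
    refine sum_congr rfl fun q hq => ?_
    have hq : q < n - j := mem_range.1 hq
    simp only [subresEntry, sylvesterVec, if_pos hq]
  · rw [show m + n - j - 1 - r = n + (m - j) - 1 - r by omega,
      ← sum_ite_coeff_mul_coeff G v hG hv (by omega)]
    refine sum_congr rfl fun q hq => ?_
    have hq : q < m - j := mem_range.1 hq
    simp only [subresEntry, sylvesterVec, if_neg (show ¬n - j + q < n - j by omega),
      if_pos (show n - j + q < n - j + (m - j) by omega), Nat.add_sub_cancel_left]

lemma exists_sylvesterVec_ne_zero {u v : K[X]} {m n j : ℕ} (hne : u ≠ 0 ∨ v ≠ 0)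
    (hu : u.degree < ↑(n - j)) (hv : v.degree < ↑(m - j)) :
    ∃ q < (n - j) + (m - j), sylvesterVec u v m n j q ≠ 0 := by
  rcases hne with hu0 | hv0
  · have hdeg : u.natDegree < n - j := by
      rwa [degree_eq_natDegree hu0, Nat.cast_lt] at hu
    refine ⟨n - j - 1 - u.natDegree, by omega, ?_⟩
    rw [sylvesterVec, if_pos (by omega), show n - j - 1 - (n - j - 1 - u.natDegree) = u.natDegree
      by omega]
    exact leadingCoeff_ne_zero.2 hu0
  · have hdeg : v.natDegree < m - j := by
      rwa [degree_eq_natDegree hv0, Nat.cast_lt] at hv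
    refine ⟨n - j + (m - j - 1 - v.natDegree), by omega, ?_⟩
    rw [sylvesterVec, if_neg (by omega), show m - j - 1 - (n - j + (m - j - 1 - v.natDegree) -
      (n - j)) = v.natDegree by omega]
    exact leadingCoeff_ne_zero.2 hv0

lemma detN_subresTau_eq_zero {F G u v : K[X]} {m n j τ : ℕ}
    (hF : F.natDegree ≤ m) (hG : G.natDegree ≤ n) (hjn : j < n) (hjm : j ≤ m) (hτ : τ ≤ j)
    (hne : u ≠ 0 ∨ v ≠ 0) (hu : u.degree < ↑(n - j)) (hv : v.degree < ↑(m - j))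
    (hS : (u * F + v * G).natDegree ≤ j) (hSτ : (u * F + v * G).coeff τ = 0) :
    detN (m + n - 2 * j) (subresTau F G m n j τ) = 0 := by
  classical
  obtain ⟨q₀, hq₀, hq₀ne⟩ := exists_sylvesterVec_ne_zero hne hu hv
  refine Matrix.exists_mulVec_eq_zero_iff.1
    ⟨fun q : Fin (m + n - 2 * j) => sylvesterVec u v m n j q, fun h => hq₀ne ?_, ?_⟩
  · simpa using congrFun h ⟨q₀, by omega⟩
  · funext p
    simp only [Matrix.mulVec, dotProduct, Matrix.of_apply, Pi.zero_apply, subresTau]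
    rw [Fin.sum_univ_eq_sum_range (fun q => subresEntry F G m n j _ q * sylvesterVec u v m n j q)]
    split_ifs with hp
    · rw [sum_subresEntry_mul_sylvesterVec hF hG hjn.le hjm hu hv (by omega)]
      exact coeff_eq_zero_of_natDegree_lt (by omega)
    · rw [sum_subresEntry_mul_sylvesterVec hF hG hjn.le hjm hu hv (by omega),
        show m + n - j - 1 - (m + n - j - τ - 1) = τ by omega, hSτ]

lemma exists_natDegree_le_one_coeff_mul_eq_zero (S : K[X]) (τ : ℕ) :
    ∃ w : K[X], w ≠ 0 ∧ w.natDegree ≤ 1 ∧ (w * S).coeff τ = 0 := by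
  by_cases hS : S.coeff τ = 0
  · exact ⟨1, one_ne_zero, by simp, by simpa using hS⟩
  · refine ⟨C (S.coeff τ) * X - C ((X * S).coeff τ), fun h => hS ?_, ?_, ?_⟩
    · simpa using congrArg (coeff · 1) h
    · exact (natDegree_sub_le _ _).trans (max_le (natDegree_C_mul_X _ hS).le (by simp))
    · rw [sub_mul, coeff_sub, mul_assoc, coeff_C_mul, coeff_C_mul, mul_comm, sub_self]

lemma subresPoly_eq_zero_of_natDegree_lt {F G u v : K[X]} {m n j : ℕ}
    (hF : F.natDegree ≤ m) (hG : G.natDegree ≤ n) (hne : u ≠ 0 ∨ v ≠ 0)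
    (hu : u.natDegree + j + 2 ≤ n) (hv : v.natDegree + j + 2 ≤ m)
    (hS : (u * F + v * G).natDegree < j) :
    subresPoly F G m n j = 0 := by
  refine sum_eq_zero fun τ hτ => ?_
  have hτ : τ ≤ j := Nat.lt_succ_iff.1 (mem_range.1 hτ)
  obtain ⟨w, hw0, hw1, hwτ⟩ := exists_natDegree_le_one_coeff_mul_eq_zero (u * F + v * G) τ
  have hdeg_lt {p : K[X]} {N : ℕ} (hp : p.natDegree + 1 < N) : (w * p).degree < N :=
    degree_le_natDegree.trans_lt
      (by exact_mod_cast natDegree_mul_le.trans_lt (by omega : w.natDegree + p.natDegree < N))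
  have hcomb : w * u * F + w * v * G = w * (u * F + v * G) := by ring
  rw [detN_subresTau_eq_zero hF hG (by omega) (by omega) hτ (u := w * u) (v := w * v)
      (by simpa [hw0] using hne) (hdeg_lt (by omega)) (hdeg_lt (by omega))
      (by rw [hcomb]; exact natDegree_mul_le.trans (by omega)) (by rwa [hcomb]),
    map_zero, zero_mul]

lemma degree_mul_add_le_of_rel {a b : K} {S₂ S₁ S q : K[X]} (hrel : C a * S₂ = q * S₁ + C b * S)
    (hS : S.degree ≤ S₂.degree) : q.degree + S₁.degree ≤ S₂.degree := by
  rw [← degree_mul, eq_sub_of_add_eq hrel.symm, C_mul', C_mul']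
  exact (degree_sub_le _ _).trans
    (max_le (degree_smul_le _ _) ((degree_smul_le _ _).trans hS))

lemma eq_cofactors_of_rel {F G S₂ S₁ S q U₂ V₂ U₁ V₁ : K[X]} {a b : K} (hb : b ≠ 0)
    (hrel : C a * S₂ = q * S₁ + C b * S) (h₂ : S₂ = U₂ * F + V₂ * G)
    (h₁ : S₁ = U₁ * F + V₁ * G) :
    S = C b⁻¹ * (C a * U₂ - q * U₁) * F + C b⁻¹ * (C a * V₂ - q * V₁) * G := by
  have hinv : C b * C b⁻¹ = 1 := by rw [← C_mul, mul_inv_cancel₀ hb, C_1]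
  linear_combination C b⁻¹ * C a * h₂ - C b⁻¹ * q * h₁ - C b⁻¹ * hrel - S * hinv

lemma degree_C_mul_sub_mul_add_le (a b : K) {q U₂ U₁ : K[X]} {e f D : WithBot ℕ}
    (h₂ : U₂.degree + e ≤ D) (h₁ : U₁.degree + f ≤ D) (hq : q.degree + e ≤ f) :
    (C b * (C a * U₂ - q * U₁)).degree + e ≤ D := by
  rw [C_mul', C_mul']
  calc (b • (a • U₂ - q * U₁)).degree + e ≤ max U₂.degree (q.degree + U₁.degree) + e := by
        gcongr
        exact (degree_smul_le _ _).trans <| (degree_sub_le _ _).trans <|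
          max_le_max (degree_smul_le _ _) (degree_mul_le _ _)
    _ = max (U₂.degree + e) (U₁.degree + (q.degree + e)) := by
        rw [← max_add_add_right]
        ac_rfl
    _ ≤ D := max_le h₂ ((add_le_add_right hq _).trans h₁)

variable {P Q : ℕ → K[X]} {α β : ℕ → K} {l : ℕ}

lemma antitoneOn_degree (h21 : (P 2).degree ≤ (P 1).degree)
    (hdeg : ∀ i, 3 ≤ i → i ≤ l → (P i).natDegree < (P (i - 1)).natDegree) :
    AntitoneOn (fun i => (P i).degree) (Set.Icc 1 l) := by
  refine antitoneOn_of_le_sub_one Set.ordConnected_Icc fun i _ hi hi' => ?_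
  obtain rfl | h3 : i = 2 ∨ 3 ≤ i := by simp only [Set.mem_Icc] at hi hi'; omega
  · exact h21
  · exact (degree_lt_degree (hdeg i h3 hi.2)).le

theorem exists_bounded_cofactors (hβ : ∀ i, 3 ≤ i → i ≤ l → β i ≠ 0)
    (hrel : ∀ i, 3 ≤ i → i ≤ l →
      C (α i) * P (i - 2) = Q (i - 1) * P (i - 1) + C (β i) * P i)
    (hanti : AntitoneOn (fun i => (P i).degree) (Set.Icc 1 l)) (i : ℕ) (hi : 2 ≤ i)
    (hil : i ≤ l) :
    ∃ U V : K[X], P i = U * P 1 + V * P 2 ∧ U.degree + (P (i - 1)).degree ≤ (P 2).degree ∧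
      V.degree + (P (i - 1)).degree ≤ (P 1).degree := by
  induction i using Nat.strong_induction_on with
  | _ i ih =>
  obtain rfl | hi3 : i = 2 ∨ 3 ≤ i := by omega
  · exact ⟨0, 1, by ring, by simp, by simp⟩
  have hanti' {a b : ℕ} (ha : 1 ≤ a) (hab : a ≤ b) (hb : b ≤ l) : (P b).degree ≤ (P a).degree :=
    hanti ⟨ha, by omega⟩ ⟨by omega, hb⟩ hab
  have hq : (Q (i - 1)).degree + (P (i - 1)).degree ≤ (P (i - 2)).degree :=
    degree_mul_add_le_of_rel (hrel i hi3 hil) (hanti' (by omega) (by omega) hil)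
  have step {U₂ V₂ U₁ V₁ : K[X]} (h₂ : P (i - 2) = U₂ * P 1 + V₂ * P 2)
      (h₁ : P (i - 1) = U₁ * P 1 + V₁ * P 2)
      (hU₂ : U₂.degree + (P (i - 1)).degree ≤ (P 2).degree)
      (hV₂ : V₂.degree + (P (i - 1)).degree ≤ (P 1).degree)
      (hU₁ : U₁.degree + (P (i - 2)).degree ≤ (P 2).degree)
      (hV₁ : V₁.degree + (P (i - 2)).degree ≤ (P 1).degree) :
      ∃ U V : K[X], P i = U * P 1 + V * P 2 ∧ U.degree + (P (i - 1)).degree ≤ (P 2).degree ∧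
        V.degree + (P (i - 1)).degree ≤ (P 1).degree :=
    ⟨_, _, eq_cofactors_of_rel (hβ i hi3 hil) (hrel i hi3 hil) h₂ h₁,
      degree_C_mul_sub_mul_add_le _ _ hU₂ hU₁ hq, degree_C_mul_sub_mul_add_le _ _ hV₂ hV₁ hq⟩
  obtain rfl | hi4 : i = 3 ∨ 4 ≤ i := by omega
  · exact step (U₂ := 1) (V₂ := 0) (U₁ := 0) (V₁ := 1) (by ring) (by ring) (by simp) (by simp)
      (by simp) (by simp)
  · obtain ⟨U₂, V₂, h₂, hU₂, hV₂⟩ := ih (i - 2) (by omega) (by omega) (by omega)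
    obtain ⟨U₁, V₁, h₁, hU₁, hV₁⟩ := ih (i - 1) (by omega) (by omega) (by omega)
    have h31 : (P (i - 1)).degree ≤ (P (i - 2 - 1)).degree :=
      hanti' (by omega) (by omega) (by omega)
    rw [show i - 1 - 1 = i - 2 by omega] at hU₁ hV₁
    exact step h₂ h₁ ((add_le_add_right h31 _).trans hU₂) ((add_le_add_right h31 _).trans hV₂)
      hU₁ hV₁

end

theorem statement_0_general {K : Type*} [Field K] (F G : Polynomial K) (m n : ℕ)
    (hF : F.natDegree = m) (hG : G.natDegree = n) (hmn : n ≤ m)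
    (kk : ℕ) (P Q : ℕ → Polynomial K) (α β : ℕ → K)
    (hP1 : P 1 = F) (hP2 : P 2 = G)
    (hPne : ∀ i, 1 ≤ i → i ≤ kk → P i ≠ 0)
    (hβ : ∀ i, 3 ≤ i → i ≤ kk → β i ≠ 0)
    (hrel : ∀ i, 3 ≤ i → i ≤ kk →
      Polynomial.C (α i) * P (i - 2) = Q (i - 1) * P (i - 1) + Polynomial.C (β i) * P i)
    (hdeg : ∀ i, 3 ≤ i → i ≤ kk → (P i).natDegree < (P (i - 1)).natDegree)
    (hcomp : (P kk).natDegree = 0) :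
    (∀ j, j < (P kk).natDegree → subresPoly F G m n j = 0) ∧
    (∀ i, 3 ≤ i → i ≤ kk → ∀ j, (P i).natDegree < j → j < (P (i - 1)).natDegree - 1 →
      subresPoly F G m n j = 0) := by
  subst hP1 hP2
  refine ⟨fun j hj => absurd hj (by omega), fun i hi3 hik j hij hji => ?_⟩
  have h21 : (P 2).degree ≤ (P 1).degree :=
    (degree_le_of_natDegree_le (by omega)).trans
      (degree_eq_natDegree (hPne 1 le_rfl (by omega))).ge
  have hanti := antitoneOn_degree h21 hdeg
  obtain ⟨U, V, hPi, hU, hV⟩ := exists_bounded_cofactors hβ hrel hanti i (by omega) hik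
  have hpred_ne : P (i - 1) ≠ 0 := hPne (i - 1) (by omega) (by omega)
  have hpred_le : (P (i - 1)).natDegree ≤ n :=
    hG ▸ natDegree_le_natDegree (hanti ⟨by omega, by omega⟩ ⟨by omega, by omega⟩ (by omega))
  refine subresPoly_eq_zero_of_natDegree_lt hF.le hG.le ?_ ?_ ?_ (hPi ▸ hij)
  · by_contra! h
    exact hPne i (by omega) hik (by rw [hPi, h.1, h.2]; ring)
  · have := natDegree_add_le_of_degree_add_le hU hpred_ne (hG ▸ hpred_le)
    omega
  · have := natDegree_add_le_of_degree_add_le hV hpred_ne (hF ▸ hpred_le.trans hmn)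
    omega

theorem statement_0 {K : Type*} [Field K] (F G : Polynomial K) (m n : ℕ)
    (hF : F.natDegree = m) (hG : G.natDegree = n) (hmn : n ≤ m) (hn : 0 < n)
    (kk : ℕ) (hkk : 2 ≤ kk) (P Q : ℕ → Polynomial K) (α β : ℕ → K)
    (hP1 : P 1 = F) (hP2 : P 2 = G)
    (hPne : ∀ i, 1 ≤ i → i ≤ kk → P i ≠ 0)
    (hα : ∀ i, 3 ≤ i → i ≤ kk → α i ≠ 0)
    (hβ : ∀ i, 3 ≤ i → i ≤ kk → β i ≠ 0)
    (hrel : ∀ i, 3 ≤ i → i ≤ kk →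
      Polynomial.C (α i) * P (i - 2) = Q (i - 1) * P (i - 1) + Polynomial.C (β i) * P i)
    (hdeg : ∀ i, 3 ≤ i → i ≤ kk → (P i).natDegree < (P (i - 1)).natDegree)
    (hcomp : (P kk).natDegree = 0) :
    (∀ j, j < (P kk).natDegree → subresPoly F G m n j = 0) ∧
    (∀ i, 3 ≤ i → i ≤ kk → ∀ j, (P i).natDegree < j → j < (P (i - 1)).natDegree - 1 →
      subresPoly F G m n j = 0) :=
  statement_0_general F G m n hF hG hmn kk P Q α β hP1 hP2 hPne hβ hrel hdeg hcomp
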